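/- Let 𝒜 be an abelian category with enough projectives, and let 𝒳 be a full additive subcategory containing the projectives. Then every bounded above complex of objects of 𝒳 is a DG-𝒳 complex, i.e. for every 𝒳-acyclic complex W, the Hom-complex Hom(X, W) is acyclic for every bounded above complex X with components in 𝒳. -/

import Mathlib

/-!
A chain map `f : Xc ⟶ V` out of a complex vanishing above degree `b` is null-homotopic as soon as
every `Hom(Xc^i, V)` is acyclic: the components `s i : Xc^{i+1} ⟶ V^i` are built by descending
induction starting from `s i = 0` for `i ≥ b`. If `s (i+1)` and `s i` satisfy the homotopy identity
in degree `i + 1`, then `f^i - d ≫ s i` is a cycle of `Hom(Xc^i, V)`, and any preimage of it under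
`d` serves as `s (i-1)`. For `V = W⟦n⟧` acyclicity of `Hom(Xc^i, V)` is that of `Hom(Xc^i, W)`,
since the shift only changes the differential by the sign `(-1)^n`.
-/

open CategoryTheory Limits

universe v u

variable {A : Type u} [Category.{v} A] [Preadditive A]

namespace HomologicalComplex

variable {ι : Type*} {c : ComplexShape ι} {K L : HomologicalComplex A c}

lemma sub_d_comp_comp_d_eq_zero (f : K ⟶ L) {q r r' : ι} (s : K.X r ⟶ L.X q)
    (s' : K.X r' ⟶ L.X r) (hf : f.f r = K.d r r' ≫ s' + s ≫ L.d q r) :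
    (f.f q - K.d q r ≫ s) ≫ L.d q r = 0 := by
  rw [Preadditive.sub_comp, f.comm, hf, Category.assoc, Preadditive.comp_add,
    d_comp_d_assoc, zero_comp, zero_add, sub_self]

end HomologicalComplex

namespace CochainComplex

def HomAcyclic (T : A) (V : CochainComplex A ℤ) : Prop :=
  ∀ (n : ℤ) (f : T ⟶ V.X n), f ≫ V.d n (n + 1) = 0 →
    ∃ g : T ⟶ V.X (n - 1), g ≫ V.d (n - 1) n = f

namespace HomAcyclic

variable {T : A} {V : CochainComplex A ℤ}

lemma exists_comp_d_eq (h : HomAcyclic T V) {p q r : ℤ} (hpq : p + 1 = q) (hqr : q + 1 = r)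
    (u : T ⟶ V.X q) (hu : u ≫ V.d q r = 0) : ∃ g : T ⟶ V.X p, g ≫ V.d p q = u := by
  subst hqr
  obtain rfl : p = q - 1 := by omega
  exact h q u hu

lemma shift (h : HomAcyclic T V) (n : ℤ) : HomAcyclic T (V⟦n⟧) := by
  intro m (u : T ⟶ V.X (m + n)) hu
  change u ≫ (n.negOnePow • V.d (m + n) (m + 1 + n)) = 0 at hu
  rw [Linear.comp_units_smul, smul_eq_zero_iff_eq] at hu
  obtain ⟨g, hg⟩ := h.exists_comp_d_eq (p := m - 1 + n) (by omega) (by omega) u hu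
  refine ⟨n.negOnePow • g, ?_⟩
  change (n.negOnePow • g) ≫ (n.negOnePow • V.d (m - 1 + n) (m + n)) = u
  rw [Linear.units_smul_comp, Linear.comp_units_smul, smul_smul, Int.units_mul_self, one_smul, hg]

end HomAcyclic

section NullHomotopy

variable {K L : CochainComplex A ℤ}

open Classical in
/-- The fallback `0` in the second `if` is never taken under the hypotheses of
`descendingNullHomotopy_spec`. -/
noncomputable def descendingNullHomotopy (f : K ⟶ L) (b i : ℤ) : K.X (i + 1) ⟶ L.X i :=
  if b < i + 1 then 0
  else
    letI u := f.f (i + 1) - K.d (i + 1) (i + 1 + 1) ≫ descendingNullHomotopy f b (i + 1)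
    if h : ∃ g : K.X (i + 1) ⟶ L.X i, g ≫ L.d i (i + 1) = u then h.choose else 0
termination_by (b - i).toNat

variable {f : K ⟶ L} {b : ℤ} (hK : ∀ i, b < i → IsZero (K.X i))
  (hL : ∀ i, HomAcyclic (K.X i) L)
include hK hL

lemma descendingNullHomotopy_spec (i : ℤ) :
    f.f (i + 1) = K.d (i + 1) (i + 1 + 1) ≫ descendingNullHomotopy f b (i + 1) +
      descendingNullHomotopy f b i ≫ L.d i (i + 1) := by
  by_cases hi : b < i + 1
  · exact (hK _ hi).eq_of_src _ _
  · have hcycle := HomologicalComplex.sub_d_comp_comp_d_eq_zero f _ _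
      (descendingNullHomotopy_spec (i + 1))
    have hlift := (hL (i + 1)).exists_comp_d_eq rfl rfl _ hcycle
    rw [descendingNullHomotopy.eq_def f b i, if_neg hi, dif_pos hlift, hlift.choose_spec,
      add_sub_cancel]
termination_by (b - i).toNat

lemma eq_nullHomotopicMap'_descendingNullHomotopy :
    f = Homotopy.nullHomotopicMap' fun i j (hji : (ComplexShape.up ℤ).Rel j i) ↦
      (K.XIsoOfEq hji).inv ≫ descendingNullHomotopy f b j := by
  ext k
  obtain ⟨i, rfl⟩ : ∃ i, k = i + 1 := ⟨k - 1, by omega⟩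
  rw [Homotopy.nullHomotopicMap'_f (c := ComplexShape.up ℤ) (k₂ := i) (k₀ := i + 1 + 1) rfl rfl]
  simpa only [HomologicalComplex.XIsoOfEq_rfl, Iso.refl_inv, Category.id_comp]
    using descendingNullHomotopy_spec hK hL i

lemma nonempty_homotopy_zero_of_isZero_of_homAcyclic : Nonempty (Homotopy f 0) :=
  ⟨(Homotopy.ofEq (eq_nullHomotopicMap'_descendingNullHomotopy hK hL)).trans
    (Homotopy.nullHomotopy' _)⟩

end NullHomotopy

end CochainComplex

theorem stmt5 {A : Type u} [Category.{v} A] [Abelian A]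
    (S : Set A)
    (Xc : CochainComplex A ℤ) (hXc : ∀ n : ℤ, Xc.X n ∈ S)
    (hbdd : ∃ b : ℤ, ∀ n : ℤ, b < n → IsZero (Xc.X n))
    (W : CochainComplex A ℤ)
    (hW : ∀ T ∈ S, ∀ (n : ℤ) (f : T ⟶ W.X n), f ≫ W.d n (n + 1) = 0 →
      ∃ g : T ⟶ W.X (n - 1), g ≫ W.d (n - 1) n = f)
    (n : ℤ) (f : Xc ⟶ W⟦n⟧) :
    Nonempty (Homotopy f 0) := by
  obtain ⟨b, hb⟩ := hbdd
  exact CochainComplex.nonempty_homotopy_zero_of_isZero_of_homAcyclic hb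
    fun i ↦ CochainComplex.HomAcyclic.shift (hW _ (hXc i)) n
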